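/- For every row index i of the Fibonacci array f_{m,n} (m,n ≥ 0), the i-th row of f_{m,n}, read as a word of length F(n), is the image of the 1D Fibonacci word f_n under a letter-to-letter substitution determined by the row: under the substitution a ↦ c, b ↦ d if f_m[i] = b, and under the substitution a ↦ a, b ↦ b if f_m[i] = a (letters coded a=(0,0), b=(0,1), c=(1,0), d=(1,1) in the array and a=0, b=1 in 1D words). Moreover, any two rows i, i' of f_{m,n} with f_m[i] = f_m[i'] are identical. -/

import Mathlib

/-!
Both recursions defining `f_{m,n}` are concatenations that split the row index as `f_m` splits
and the column index as `f_n` splits, so entry `(i, j)` of `f_{m,n}` is the pair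
`(f_m[i], f_n[j])`. Row `i` is therefore `f_n` with the first coordinate `f_m[i]` attached.
-/

/-- Fibonacci numbers: F(0)=1, F(1)=1, F(n+2)=F(n+1)+F(n). -/
def F : ℕ → ℕ
  | 0 => 1
  | 1 => 1
  | n + 2 => F (n + 1) + F n

/-- Finite Fibonacci words over {a,b} coded as Fin 2 (a=0, b=1). -/
def fibWord : ℕ → List (Fin 2)
  | 0 => [0]
  | 1 => [1]
  | n + 2 => fibWord (n + 1) ++ fibWord n

/-- The Fibonacci arrays f_{m,n} over {a,b,c,d} coded as Fin 2 × Fin 2,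
with a=(0,0), b=(0,1), c=(1,0), d=(1,1); `fibArr m n i j` is the (i,j) entry
(0-indexed, only indices i < F m, j < F n are meaningful). -/
def fibArr : ℕ → ℕ → ℕ → ℕ → Fin 2 × Fin 2
  | 0, 0, _, _ => (0, 0)
  | 0, 1, _, _ => (0, 1)
  | 1, 0, _, _ => (1, 0)
  | 1, 1, _, _ => (1, 1)
  | 0, n + 2, i, j =>
      if j < F (n + 1) then fibArr 0 (n + 1) i j else fibArr 0 n i (j - F (n + 1))
  | 1, n + 2, i, j =>
      if j < F (n + 1) then fibArr 1 (n + 1) i j else fibArr 1 n i (j - F (n + 1))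
  | m + 2, k, i, j =>
      if i < F (m + 1) then fibArr (m + 1) k i j else fibArr m k (i - F (m + 1)) j
  termination_by m n => (m, n)

/-- The r × l subarray of u with top-left entry at (i,j). -/
def subarr (u : ℕ → ℕ → Fin 2 × Fin 2) (i j r l : ℕ) : Fin r × Fin l → Fin 2 × Fin 2 :=
  fun p => u (i + p.1.val) (j + p.2.val)

/-- Number of square occurrences in a finite word. -/
noncomputable def sqOcc (w : List (Fin 2)) : ℕ :=
  {p : ℕ × ℕ | 1 ≤ p.2 ∧ p.1 + 2 * p.2 ≤ w.length ∧
    ∀ t < p.2, w.getD (p.1 + t) 0 = w.getD (p.1 + p.2 + t) 0}.ncard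

/-- R(n): number of square occurrences in f_n. -/
noncomputable def R (n : ℕ) : ℕ := sqOcc (fibWord n)

/-- The substitution a ↦ a, b ↦ b (into the 4-letter alphabet): 0 ↦ (0,0)=a, 1 ↦ (0,1)=b. -/
def substA : Fin 2 → Fin 2 × Fin 2
  | 0 => (0, 0)
  | 1 => (0, 1)

/-- The substitution a ↦ c, b ↦ d: 0 ↦ (1,0)=c, 1 ↦ (1,1)=d. -/
def substB : Fin 2 → Fin 2 × Fin 2
  | 0 => (1, 0)
  | 1 => (1, 1)

theorem fibWord_length (n : ℕ) : (fibWord n).length = F n := by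
  induction n using fibWord.induct <;> simp_all [fibWord, F]

theorem fibWord_getD_add_two (n i : ℕ) :
    (fibWord (n + 2)).getD i 0 =
      if i < F (n + 1) then (fibWord (n + 1)).getD i 0 else (fibWord n).getD (i - F (n + 1)) 0 := by
  rw [fibWord]
  split_ifs with h
  · exact List.getD_append _ _ _ _ (by rwa [fibWord_length])
  · rw [List.getD_append_right _ _ _ _ (by rw [fibWord_length]; omega), fibWord_length]

theorem fibArr_eq_getD {m n i j : ℕ} (hi : i < F m) (hj : j < F n) :
    fibArr m n i j = ((fibWord m).getD i 0, (fibWord n).getD j 0) := by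
  induction m, n, i, j using fibArr.induct with
  | case1 | case2 | case3 | case4 => simp_all [F, fibArr, fibWord]
  | case5 n i j h ih | case7 n i j h ih =>
    rw [fibArr, fibWord_getD_add_two, if_pos h, if_pos h, ih hi h]
  | case6 n i j h ih | case8 n i j h ih =>
    rw [fibArr, fibWord_getD_add_two, if_neg h, if_neg h, ih hi (by simp only [F] at hj; omega)]
  | case9 m k i j h ih =>
    rw [fibArr, fibWord_getD_add_two, if_pos h, if_pos h, ih h hj]
  | case10 m k i j h ih =>
    rw [fibArr, fibWord_getD_add_two, if_neg h, if_neg h, ih (by simp only [F] at hi; omega) hj]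

theorem ite_substB_substA_apply (x y : Fin 2) :
    (if x = 1 then substB else substA) y = (x, y) := by
  fin_cases x <;> fin_cases y <;> rfl

/-- each row i of f_{m,n}, read as a word of length F(n), is the image of
the 1D Fibonacci word f_n under the letter-to-letter substitution a ↦ c, b ↦ d if
f_m[i] = b, and under a ↦ a, b ↦ b if f_m[i] = a.  Moreover any two rows i, i' of f_{m,n}
with f_m[i] = f_m[i'] are identical. -/
theorem stmt19 (m n i : ℕ) (hi : i < F m) :
    (List.ofFn (fun j : Fin (F n) => fibArr m n i j.val)
      = (fibWord n).map (if (fibWord m).getD i 0 = 1 then substB else substA)) ∧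
    (∀ i' < F m, (fibWord m).getD i 0 = (fibWord m).getD i' 0 →
      ∀ j < F n, fibArr m n i j = fibArr m n i' j) := by
  constructor
  · refine List.ext_getElem (by simp [fibWord_length]) fun j _ hj => ?_
    have hj' : j < F n := by rwa [List.length_map, fibWord_length] at hj
    rw [List.getElem_ofFn, List.getElem_map, fibArr_eq_getD hi hj', ite_substB_substA_apply]
    exact congrArg _ (List.getD_eq_getElem _ _ _)
  · intro i' hi' hrow j hj
    rw [fibArr_eq_getD hi hj, fibArr_eq_getD hi' hj, hrow]
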